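/- arXiv:2412.17187 — 8 statements merged into one kernel-verified Lean document; each statement's English description precedes it below -/
import Mathlib

section
/- Let R be a G-graded ring that is gr-prime (i.e., for homogeneous a, b, aRb = {0} implies a = 0 or b = 0). If a, b ∈ R with aRb = {0} and at least one of a, b is homogeneous, then a = 0 or b = 0. -/
/-!
Each homogeneous component of `b` still satisfies `a r b_j = 0` for all `r` when `a` is
homogeneous: for homogeneous `r` the product `a r` is homogeneous, so `a r b_j` is a homogeneous
component of `a r b = 0`, and the general case follows by additivity in `r`. Gr-primeness then
kills every component of `b` unless `a = 0`; the case of homogeneous `b` is symmetric.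
-/

def IsHomog {G R : Type*} [Ring R] (A : G → AddSubgroup R) (a : R) : Prop := ∃ g, a ∈ A g

def GrPrime {G R : Type*} [Ring R] (A : G → AddSubgroup R) : Prop :=
  ∀ a b : R, IsHomog A a → IsHomog A b → (∀ r : R, a * r * b = 0) → a = 0 ∨ b = 0

def IsHomogDer {G R : Type*} [Ring R] (A : G → AddSubgroup R) (d : R → R) : Prop :=
  (∀ x y : R, d (x + y) = d x + d y) ∧
  (∀ x y : R, d (x * y) = d x * y + x * d y) ∧
  (∀ a : R, IsHomog A a → IsHomog A (d a))

def IsGenHomogDer {G R : Type*} [Ring R] (A : G → AddSubgroup R) (F d : R → R) : Prop :=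
  (∀ x y : R, F (x + y) = F x + F y) ∧
  IsHomogDer A d ∧
  (∀ x y : R, F (x * y) = F x * y + x * d y) ∧
  (∀ a : R, IsHomog A a → IsHomog A (F a))

open DirectSum

section Components

variable {ι A σ : Type*} [DecidableEq ι] [Semiring A] [SetLike σ A] [AddSubmonoidClass σ A]
  (𝒜 : ι → σ)

theorem eq_zero_of_forall_coe_decompose_eq_zero [Decomposition 𝒜] {x : A}
    (h : ∀ i, (decompose 𝒜 x i : A) = 0) : x = 0 :=
  (decompose 𝒜).injective <| by ext i; simp [h i]

theorem mul_mul_coe_decompose_eq_zero_of_left_mem [AddLeftCancelMonoid ι] [GradedRing 𝒜]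
    {i : ι} {a b : A} (ha : a ∈ 𝒜 i) (hab : ∀ r, a * r * b = 0) (j : ι) (r : A) :
    a * r * (decompose 𝒜 b j : A) = 0 := by
  induction r using Decomposition.inductionOn 𝒜 with
  | zero => simp
  | @homogeneous k r =>
    rw [← coe_decompose_mul_add_of_left_mem 𝒜 (SetLike.mul_mem_graded ha r.2), hab,
      decompose_zero, DirectSum.zero_apply, ZeroMemClass.coe_zero]
  | add r r' hr hr' => rw [mul_add, add_mul, hr, hr', add_zero]

theorem coe_decompose_mul_mul_eq_zero_of_right_mem [AddRightCancelMonoid ι] [GradedRing 𝒜]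
    {i : ι} {a b : A} (hb : b ∈ 𝒜 i) (hab : ∀ r, a * r * b = 0) (j : ι) (r : A) :
    (decompose 𝒜 a j : A) * r * b = 0 := by
  induction r using Decomposition.inductionOn 𝒜 with
  | zero => simp
  | @homogeneous k r =>
    rw [mul_assoc, ← coe_decompose_mul_add_of_right_mem 𝒜 (SetLike.mul_mem_graded r.2 hb),
      ← mul_assoc, hab, decompose_zero, DirectSum.zero_apply, ZeroMemClass.coe_zero]
  | add r r' hr hr' => rw [mul_add, add_mul, hr, hr', add_zero]

end Components

namespace GrPrime

variable {G R : Type*} [AddCommGroup G] [DecidableEq G] [Ring R] {A : G → AddSubgroup R}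
  [GradedRing A]

theorem eq_zero_or_eq_zero_of_isHomog_left (hP : GrPrime A) {a b : R} (ha : IsHomog A a)
    (hab : ∀ r, a * r * b = 0) : a = 0 ∨ b = 0 := by
  obtain ⟨i, hai⟩ := ha
  refine or_iff_not_imp_left.2 fun ha0 => eq_zero_of_forall_coe_decompose_eq_zero A fun j => ?_
  exact (hP a _ ⟨i, hai⟩ ⟨j, SetLike.coe_mem _⟩
    (mul_mul_coe_decompose_eq_zero_of_left_mem A hai hab j)).resolve_left ha0

theorem eq_zero_or_eq_zero_of_isHomog_right (hP : GrPrime A) {a b : R} (hb : IsHomog A b)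
    (hab : ∀ r, a * r * b = 0) : a = 0 ∨ b = 0 := by
  obtain ⟨i, hbi⟩ := hb
  refine or_iff_not_imp_right.2 fun hb0 => eq_zero_of_forall_coe_decompose_eq_zero A fun j => ?_
  exact (hP _ b ⟨j, SetLike.coe_mem _⟩ ⟨i, hbi⟩
    (coe_decompose_mul_mul_eq_zero_of_right_mem A hbi hab j)).resolve_right hb0

end GrPrime

theorem stmt0 {G R : Type*} [AddCommGroup G] [DecidableEq G] [Ring R] (A : G → AddSubgroup R) [GradedRing A] (hP : GrPrime A)
    (a b : R) (hhom : IsHomog A a ∨ IsHomog A b)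
    (hab : ∀ r : R, a * r * b = 0) :
    a = 0 ∨ b = 0 :=
  hhom.elim (hP.eq_zero_or_eq_zero_of_isHomog_left · hab)
    (hP.eq_zero_or_eq_zero_of_isHomog_right · hab)
end

section
/- Let R be a gr-prime graded ring and I a nonzero graded one-sided ideal of R. Then the centralizer of I in R equals the center Z(R) of R. -/
/-!
Let `x` centralize `I`, say a left ideal, and `r ∈ R`. For `y ∈ I` also `r * y ∈ I`, so
`(x * r - r * x) * y = r * y * x - r * y * x = 0`; hence `(x * r - r * x) * R * b = 0` for a nonzero
homogeneous `b ∈ I`, which exists because `I` is graded. Gr-primeness is only stated for homogeneous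
pairs, but multiplying by the homogeneous `s * b` shifts degrees uniformly, so every homogeneous
component of `x * r - r * x` also annihilates `R * b`, and therefore vanishes.
-/

open DirectSum

section Graded

variable {G R : Type*} [AddCommGroup G] [DecidableEq G] [Ring R] (A : G → AddSubgroup R)
  [GradedRing A]

lemma eq_zero_of_forall_coe_decompose_eq_zero_s1 {d : R}
    (h : ∀ g, (decompose A d g : R) = 0) : d = 0 :=
  (decompose A).injective <| by
    ext g
    simpa using h g

lemma exists_homog_ne_zero_mem {I : AddSubgroup R} (hI0 : I ≠ ⊥)
    (hIgr : ∀ x ∈ I, ∀ g : G, (decompose A x g : R) ∈ I) :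
    ∃ h : G, ∃ b ∈ I, b ∈ A h ∧ b ≠ 0 := by
  obtain ⟨⟨w, hwI⟩, hw0⟩ := AddSubgroup.ne_bot_iff_exists_ne_zero.mp hI0
  have hw0 : w ≠ 0 := fun hw => hw0 (Subtype.ext hw)
  obtain ⟨h, hb0⟩ : ∃ h, (decompose A w h : R) ≠ 0 := by
    by_contra! hw
    exact hw0 (eq_zero_of_forall_coe_decompose_eq_zero_s1 A hw)
  exact ⟨h, _, hIgr w hwI h, SetLike.coe_mem _, hb0⟩

lemma coe_decompose_mul_mul_eq_zero_of_mem_right {d b : R} {h : G} (hb : b ∈ A h)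
    (hd : ∀ s, d * s * b = 0) (g : G) (s : R) : (decompose A d g : R) * s * b = 0 := by
  induction s using DirectSum.Decomposition.inductionOn A with
  | zero => simp
  | @homogeneous i m =>
    have hmb : (m : R) * b ∈ A (i + h) := SetLike.mul_mem_graded m.2 hb
    rw [mul_assoc, ← coe_decompose_mul_add_of_right_mem A hmb, ← mul_assoc, hd,
      decompose_zero, DirectSum.zero_apply, ZeroMemClass.coe_zero]
  | add s t hs ht => rw [mul_add, add_mul, hs, ht, add_zero]

lemma coe_decompose_mul_mul_eq_zero_of_mem_left {d b : R} {h : G} (hb : b ∈ A h)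
    (hd : ∀ s, b * s * d = 0) (g : G) (s : R) : b * s * (decompose A d g : R) = 0 := by
  induction s using DirectSum.Decomposition.inductionOn A with
  | zero => simp
  | @homogeneous i m =>
    have hbm : b * (m : R) ∈ A (h + i) := SetLike.mul_mem_graded hb m.2
    rw [← coe_decompose_mul_add_of_left_mem A hbm, hd, decompose_zero, DirectSum.zero_apply,
      ZeroMemClass.coe_zero]
  | add s t hs ht => rw [mul_add, add_mul, hs, ht, add_zero]

variable {A}

lemma GrPrime.eq_zero_or_eq_zero_of_mem_right (hP : GrPrime A) {a b : R} {h : G}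
    (hb : b ∈ A h) (hab : ∀ r, a * r * b = 0) : a = 0 ∨ b = 0 := by
  refine or_iff_not_imp_right.mpr fun hb0 => eq_zero_of_forall_coe_decompose_eq_zero_s1 A fun g => ?_
  exact (hP _ b ⟨g, SetLike.coe_mem _⟩ ⟨h, hb⟩
    (coe_decompose_mul_mul_eq_zero_of_mem_right A hb hab g)).resolve_right hb0

lemma GrPrime.eq_zero_or_eq_zero_of_mem_left (hP : GrPrime A) {a b : R} {h : G}
    (ha : a ∈ A h) (hab : ∀ r, a * r * b = 0) : a = 0 ∨ b = 0 := by
  refine or_iff_not_imp_left.mpr fun ha0 => eq_zero_of_forall_coe_decompose_eq_zero_s1 A fun g => ?_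
  exact (hP a _ ⟨h, ha⟩ ⟨g, SetLike.coe_mem _⟩
    (coe_decompose_mul_mul_eq_zero_of_mem_left A ha hab g)).resolve_left ha0

end Graded

section Commutator

variable {R : Type*} [Ring R] {x r y : R}

lemma sub_mul_eq_zero_of_mul_comm (hy : x * y = y * x) (hry : x * (r * y) = r * y * x) :
    (x * r - r * x) * y = 0 := by
  rw [sub_mul, mul_assoc x r y, hry, mul_assoc r x y, hy, mul_assoc, sub_self]

lemma mul_sub_eq_zero_of_mul_comm (hy : x * y = y * x) (hyr : x * (y * r) = y * r * x) :
    y * (x * r - r * x) = 0 := by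
  rw [mul_sub, ← mul_assoc y x r, ← hy, mul_assoc x y r, hyr, mul_assoc, sub_self]

end Commutator

theorem stmt1 {G R : Type*} [AddCommGroup G] [DecidableEq G] [Ring R] (A : G → AddSubgroup R) [GradedRing A] (hP : GrPrime A)
    (I : AddSubgroup R) (hI0 : I ≠ ⊥)
    (hIone : (∀ (r : R), ∀ x ∈ I, r * x ∈ I) ∨ (∀ (r : R), ∀ x ∈ I, x * r ∈ I))
    (hIgr : ∀ x ∈ I, ∀ g : G, (DirectSum.decompose A x g : R) ∈ I) :
    ∀ x : R, (∀ y ∈ I, x * y = y * x) ↔ (∀ y : R, x * y = y * x) := by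
  intro x
  refine ⟨fun hx r => ?_, fun hx y _ => hx y⟩
  obtain ⟨h, b, hbI, hbA, hb0⟩ := exists_homog_ne_zero_mem A hI0 hIgr
  rw [← sub_eq_zero]
  rcases hIone with hL | hR
  · have hann (s : R) : (x * r - r * x) * s * b = 0 := by
      rw [mul_assoc]
      exact sub_mul_eq_zero_of_mul_comm (hx _ (hL s b hbI)) (hx _ (hL r _ (hL s b hbI)))
    exact (hP.eq_zero_or_eq_zero_of_mem_right hbA hann).resolve_right hb0
  · have hann (s : R) : b * s * (x * r - r * x) = 0 :=
      mul_sub_eq_zero_of_mul_comm (hx _ (hR s b hbI)) (hx _ (hR r _ (hR s b hbI)))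
    exact (hP.eq_zero_or_eq_zero_of_mem_left hbA hann).resolve_left hb0
end

section
/- If a gr-prime graded ring R has a nonzero central graded ideal, then R is commutative. -/
/-!
Pick a nonzero homogeneous element `b` of the central ideal `I`. Since `b` and `b * x` are both
central, `b` annihilates every commutator: `b * (x * y - y * x) = b * x * y - y * (b * x) = 0`.
For homogeneous `x`, `y` the commutator is again homogeneous, and `b * r * (x * y - y * x) = 0` for
all `r` because `b * r ∈ I`; gr-primeness and `b ≠ 0` force `x * y = y * x`. Homogeneous elements
therefore commute, and so does everything, by decomposing into homogeneous components.
-/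

theorem mul_commutator_eq_zero_of_commute {R : Type*} [Ring R] {z x y : R}
    (hz : Commute z y) (hzx : Commute (z * x) y) : z * (x * y - y * x) = 0 := by
  have : z * x * y = z * y * x := by
    rw [hzx.eq, ← mul_assoc, hz.symm.eq]
  rw [mul_sub, ← mul_assoc, ← mul_assoc, this, sub_self]

section Graded

variable {ι R : Type*} [Ring R] {A : ι → AddSubgroup R}

theorem isHomog_mul_sub_mul [AddCommMonoid ι] [SetLike.GradedMul A] {x y : R}
    (hx : IsHomog A x) (hy : IsHomog A y) : IsHomog A (x * y - y * x) := by
  obtain ⟨i, hi⟩ := hx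
  obtain ⟨j, hj⟩ := hy
  refine ⟨i + j, sub_mem (SetLike.mul_mem_graded hi hj) ?_⟩
  simpa only [add_comm j i] using SetLike.mul_mem_graded hj hi

theorem GrPrime.commute_of_isHomog [AddCommMonoid ι] [SetLike.GradedMul A] (hP : GrPrime A)
    {b : R} (hb : IsHomog A b) (hb0 : b ≠ 0) (hann : ∀ r x y : R, b * r * (x * y - y * x) = 0)
    {x y : R} (hx : IsHomog A x) (hy : IsHomog A y) : Commute x y :=
  sub_eq_zero.mp <| (hP b _ hb (isHomog_mul_sub_mul hx hy) fun r => hann r x y).resolve_left hb0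

variable [DecidableEq ι] [DirectSum.Decomposition A]

theorem exists_isHomog_ne_zero_mem {I : AddSubgroup R} (hI0 : I ≠ ⊥)
    (hIgr : ∀ x ∈ I, ∀ i : ι, (DirectSum.decompose A x i : R) ∈ I) :
    ∃ b ∈ I, IsHomog A b ∧ b ≠ 0 := by
  obtain ⟨a, haI, ha0⟩ := I.bot_or_exists_ne_zero.resolve_left hI0
  obtain ⟨i, hi⟩ : ∃ i, (DirectSum.decompose A a i : R) ≠ 0 := by
    classical
    contrapose! ha0
    rw [← DirectSum.sum_support_decompose A a]
    exact Finset.sum_eq_zero fun i _ => ha0 i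
  exact ⟨_, hIgr a haI i, ⟨i, SetLike.coe_mem _⟩, hi⟩

theorem commute_of_forall_isHomog_commute
    (h : ∀ x y : R, IsHomog A x → IsHomog A y → Commute x y) (x y : R) : Commute x y := by
  classical
  rw [← DirectSum.sum_support_decompose A x]
  refine Commute.sum_left _ _ _ fun i _ => ?_
  rw [← DirectSum.sum_support_decompose A y]
  exact Commute.sum_right _ _ _ fun j _ => h _ _ ⟨i, SetLike.coe_mem _⟩ ⟨j, SetLike.coe_mem _⟩

end Graded

theorem stmt2_general {G R : Type*} [AddCommGroup G] [DecidableEq G] [Ring R] (A : G → AddSubgroup R) [GradedRing A] (hP : GrPrime A)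
    (I : AddSubgroup R) (hI0 : I ≠ ⊥)
    (hIr : ∀ (r : R), ∀ x ∈ I, x * r ∈ I)
    (hIgr : ∀ x ∈ I, ∀ g : G, (DirectSum.decompose A x g : R) ∈ I)
    (hcentral : ∀ x ∈ I, ∀ y : R, x * y = y * x) :
    ∀ x y : R, x * y = y * x := by
  obtain ⟨b, hbI, hb, hb0⟩ := exists_isHomog_ne_zero_mem hI0 hIgr
  have hann : ∀ r x y : R, b * r * (x * y - y * x) = 0 := fun r x y =>
    have hbr : b * r ∈ I := hIr r b hbI
    mul_commutator_eq_zero_of_commute (hcentral _ hbr y) (hcentral _ (hIr x _ hbr) y)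
  exact fun x y => (commute_of_forall_isHomog_commute
    (fun _ _ => hP.commute_of_isHomog hb hb0 hann) x y).eq

theorem stmt2 {G R : Type*} [AddCommGroup G] [DecidableEq G] [Ring R] (A : G → AddSubgroup R) [GradedRing A] (hP : GrPrime A)
    (I : AddSubgroup R) (hI0 : I ≠ ⊥)
    (hIl : ∀ (r : R), ∀ x ∈ I, r * x ∈ I) (hIr : ∀ (r : R), ∀ x ∈ I, x * r ∈ I)
    (hIgr : ∀ x ∈ I, ∀ g : G, (DirectSum.decompose A x g : R) ∈ I)
    (hcentral : ∀ x ∈ I, ∀ y : R, x * y = y * x) :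
    ∀ x y : R, x * y = y * x :=
  stmt2_general A hP I hI0 hIr hIgr hcentral
end

section
/- Let R be a gr-prime graded ring and I a nonzero graded ideal of R. If R admits a generalized homogeneous derivation F with nonzero associated homogeneous derivation d such that F(xy) + xy ∈ Z(R) for all x, y ∈ I, then R is commutative. -/
/-! Put `c(x, y) = F(xy) + xy`. From `F(xyz) = F(xy)z + xy·d z` we get
`c(x, yz) = c(x, y)z + xy·d z`, so centrality of `c` on `I` makes `xy·d z` commute with `z` for
all `x, y ∈ I`, `z ∈ R`. Replacing `x` by `r x` gives `(r z - z r)·(x s)·(y·d z) = 0`, and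
gr-primeness (twice, against the nonzero graded ideal `I`) shows that every homogeneous `z` with
`d z ≠ 0` is central. Fix such a `z`; then `d z` is central too. A homogeneous `x` with `d x = 0`
either has `x·d z = 0`, hence `x = 0`, or `d (x z) = x·d z ≠ 0`, so `x z` is central and then so
is `x`. Hence every homogeneous element, and so every element, is central. -/

open DirectSum

section

variable {G R : Type*} [Ring R] {A : G → AddSubgroup R}

theorem IsHomog.mul [Add G] [SetLike.GradedMul A] {a b : R} (ha : IsHomog A a)
    (hb : IsHomog A b) : IsHomog A (a * b) := by
  obtain ⟨g, hg⟩ := ha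
  obtain ⟨g', hg'⟩ := hb
  exact ⟨g + g', SetLike.mul_mem_graded hg hg'⟩

theorem IsHomog.mul_sub_mul [AddCommMagma G] [SetLike.GradedMul A] {a b : R}
    (ha : IsHomog A a) (hb : IsHomog A b) : IsHomog A (a * b - b * a) := by
  obtain ⟨g, hg⟩ := ha
  obtain ⟨g', hg'⟩ := hb
  refine ⟨g + g', sub_mem (SetLike.mul_mem_graded hg hg') ?_⟩
  rw [add_comm]
  exact SetLike.mul_mem_graded hg' hg

variable (A) in
theorem IsHomog.induction_on [DecidableEq G] [Decomposition A] {p : R → Prop} (zero : p 0)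
    (add : ∀ a b, p a → p b → p (a + b)) (homog : ∀ a, IsHomog A a → p a) (a : R) : p a :=
  Decomposition.inductionOn A zero (fun m => homog m ⟨_, m.2⟩) add a

variable (A) in
theorem forall_commute_of_forall_homog [DecidableEq G] [Decomposition A] {z : R}
    (h : ∀ r, IsHomog A r → Commute r z) (r : R) : Commute r z :=
  IsHomog.induction_on A (Commute.zero_left z) (fun _ _ => Commute.add_left) h r

variable (A) in
structure IsGradedIdeal [DecidableEq G] [Decomposition A] (I : AddSubgroup R) : Prop where
  mul_mem_left : ∀ r, ∀ x ∈ I, r * x ∈ I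
  mul_mem_right : ∀ r, ∀ x ∈ I, x * r ∈ I
  isHomogeneous : SetLike.IsHomogeneous A I

theorem IsGradedIdeal.exists_homog_ne_zero [DecidableEq G] [Decomposition A] {I : AddSubgroup R}
    (hI : IsGradedIdeal A I) (hI0 : I ≠ ⊥) : ∃ x ∈ I, IsHomog A x ∧ x ≠ 0 := by
  by_contra! hzero
  obtain ⟨x, hx, hx0⟩ := I.bot_or_exists_ne_zero.resolve_left hI0
  refine hx0 ((decompose A).injective ?_)
  ext g
  simpa using hzero _ (hI.isHomogeneous g hx) ⟨g, SetLike.coe_mem _⟩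

namespace GrPrime

theorem eq_zero_of_mul_central (hP : GrPrime A) {a c : R} (ha : IsHomog A a) (hc : IsHomog A c)
    (hc0 : c ≠ 0) (hcZ : ∀ r, Commute r c) (h : a * c = 0) : a = 0 :=
  (hP a c ha hc fun r => by rw [mul_assoc, (hcZ r).eq, ← mul_assoc, h, zero_mul]).resolve_right
    hc0

theorem forall_commute_of_mul_central [AddCommMonoid G] [DecidableEq G] [GradedRing A]
    (hP : GrPrime A) {a c : R} (ha : IsHomog A a) (hc : IsHomog A c) (hc0 : c ≠ 0)
    (hcZ : ∀ r, Commute r c) (hacZ : ∀ r, Commute r (a * c)) (r : R) : Commute r a := by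
  refine forall_commute_of_forall_homog A (fun r hr => ?_) r
  have hcomm : (r * a - a * r) * c = 0 := by
    rw [sub_mul, mul_assoc, mul_assoc, (hcZ r).eq, ← mul_assoc a, (hacZ r).eq, sub_self]
  exact sub_eq_zero.mp (hP.eq_zero_of_mul_central (hr.mul_sub_mul ha) hc hc0 hcZ hcomm)

variable [AddMonoid G] [DecidableEq G] [GradedRing A] {I : AddSubgroup R}

theorem eq_zero_of_mul_ideal_eq_zero (hP : GrPrime A) (hI : IsGradedIdeal A I) (hI0 : I ≠ ⊥)
    {a : R} (ha : IsHomog A a) (h : ∀ x ∈ I, IsHomog A x → a * x = 0) : a = 0 := by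
  obtain ⟨x₀, hx₀I, hx₀, hx₀0⟩ := hI.exists_homog_ne_zero hI0
  refine (hP a x₀ ha hx₀ fun s => ?_).resolve_right hx₀0
  refine IsHomog.induction_on A (p := fun s => a * s * x₀ = 0) (by simp)
    (fun s t hs ht => by rw [mul_add, add_mul, hs, ht, add_zero]) (fun s hs => ?_) s
  rw [mul_assoc]
  exact h _ (hI.mul_mem_left s x₀ hx₀I) (hs.mul hx₀)

theorem eq_zero_of_ideal_mul_eq_zero (hP : GrPrime A) (hI : IsGradedIdeal A I) (hI0 : I ≠ ⊥)
    {b : R} (hb : IsHomog A b) (h : ∀ x ∈ I, IsHomog A x → x * b = 0) : b = 0 := by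
  obtain ⟨x₀, hx₀I, hx₀, hx₀0⟩ := hI.exists_homog_ne_zero hI0
  refine (hP x₀ b hx₀ hb fun s => ?_).resolve_left hx₀0
  refine IsHomog.induction_on A (p := fun s => x₀ * s * b = 0) (by simp)
    (fun s t hs ht => by rw [mul_add, add_mul, hs, ht, add_zero]) (fun s hs => ?_) s
  exact h _ (hI.mul_mem_right s x₀ hx₀I) (hx₀.mul hs)

end GrPrime

theorem commute_apply_of_leibniz {d : R → R} (hmul : ∀ x y, d (x * y) = d x * y + x * d y)
    {z : R} (hz : ∀ r, Commute r z) (r : R) : Commute r (d z) := by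
  have h := congrArg d (hz r).eq
  rw [hmul, hmul, (hz (d r)).eq, add_comm (d z * r)] at h
  exact add_left_cancel h

theorem IsHomogDer.map_zero {d : R → R} (hd : IsHomogDer A d) : d 0 = 0 := by
  simpa using hd.1 0 0

theorem IsHomogDer.exists_homog_apply_ne_zero [DecidableEq G] [Decomposition A] {d : R → R}
    (hd : IsHomogDer A d) (hd0 : d ≠ 0) : ∃ z, IsHomog A z ∧ d z ≠ 0 := by
  by_contra! h
  exact hd0 (funext (IsHomog.induction_on A (p := fun r => d r = 0) hd.map_zero
    (fun a b ha hb => by rw [hd.1, ha, hb, add_zero]) h))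

section CentralizingGenDer

variable {I : AddSubgroup R} {F d : R → R}

theorem commute_mul_mul_apply_self (hFmul : ∀ x y, F (x * y) = F x * y + x * d y)
    (hIr : ∀ r, ∀ x ∈ I, x * r ∈ I)
    (hcen : ∀ x ∈ I, ∀ y ∈ I, ∀ r, Commute (F (x * y) + x * y) r) {x y : R} (hx : x ∈ I)
    (hy : y ∈ I) (z : R) : Commute (x * y * d z) z := by
  have hFxyz : F (x * (y * z)) + x * (y * z) = (F (x * y) + x * y) * z + x * y * d z := by
    rw [← mul_assoc, hFmul, add_mul]
    abel
  have hc := (hcen x hx (y * z) (hIr z y hy) z).sub_left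
    ((hcen x hx y hy z).mul_left (Commute.refl z))
  rwa [hFxyz, add_sub_cancel_left] at hc

theorem commutator_mul_mul_mul_apply_eq_zero (hFmul : ∀ x y, F (x * y) = F x * y + x * d y)
    (hIl : ∀ r, ∀ x ∈ I, r * x ∈ I) (hIr : ∀ r, ∀ x ∈ I, x * r ∈ I)
    (hcen : ∀ x ∈ I, ∀ y ∈ I, ∀ r, Commute (F (x * y) + x * y) r) (r : R) {x y : R}
    (hx : x ∈ I) (hy : y ∈ I) (z : R) : (r * z - z * r) * (x * y * d z) = 0 := by
  have hw := (commute_mul_mul_apply_self hFmul hIr hcen hx hy z).eq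
  have hrw := (commute_mul_mul_apply_self hFmul hIr hcen (hIl r x hx) hy z).eq
  rw [sub_mul, sub_eq_zero]
  simp only [mul_assoc] at hw hrw ⊢
  rw [← hw, hrw]

end CentralizingGenDer

section Commutativity

variable [AddCommMonoid G] [DecidableEq G] [GradedRing A] {I : AddSubgroup R} {F d : R → R}

theorem forall_commute_of_apply_ne_zero (hP : GrPrime A) (hI : IsGradedIdeal A I) (hI0 : I ≠ ⊥)
    (hFmul : ∀ x y, F (x * y) = F x * y + x * d y) (hd : IsHomogDer A d)
    (hcen : ∀ x ∈ I, ∀ y ∈ I, ∀ r, Commute (F (x * y) + x * y) r) ⦃z : R⦄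
    (hz : IsHomog A z) (hdz : d z ≠ 0) (r : R) : Commute r z := by
  have hdzh : IsHomog A (d z) := hd.2.2 z hz
  obtain ⟨y, hyI, hy, hydz⟩ : ∃ y ∈ I, IsHomog A y ∧ y * d z ≠ 0 := by
    by_contra! hcon
    exact hdz (hP.eq_zero_of_ideal_mul_eq_zero hI hI0 hdzh hcon)
  refine forall_commute_of_forall_homog A (fun r hr => ?_) r
  refine sub_eq_zero.mp
    (hP.eq_zero_of_mul_ideal_eq_zero hI hI0 (hr.mul_sub_mul hz) fun x hxI hx => ?_)
  refine (hP _ _ ((hr.mul_sub_mul hz).mul hx) (hy.mul hdzh) fun s => ?_).resolve_right hydz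
  simpa only [mul_assoc] using commutator_mul_mul_mul_apply_eq_zero hFmul hI.mul_mem_left
    hI.mul_mem_right hcen r (hI.mul_mem_right s x hxI) hyI z

theorem forall_commute_of_homog (hP : GrPrime A) (hI : IsGradedIdeal A I) (hI0 : I ≠ ⊥)
    (hFmul : ∀ x y, F (x * y) = F x * y + x * d y) (hd : IsHomogDer A d) (hd0 : d ≠ 0)
    (hcen : ∀ x ∈ I, ∀ y ∈ I, ∀ r, Commute (F (x * y) + x * y) r) {x : R}
    (hx : IsHomog A x) (r : R) : Commute r x := by
  have central := forall_commute_of_apply_ne_zero hP hI hI0 hFmul hd hcen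
  obtain ⟨z, hz, hdz⟩ := hd.exists_homog_apply_ne_zero hd0
  have hz0 : z ≠ 0 := fun h => hdz (h ▸ hd.map_zero)
  by_cases hdx : d x = 0
  · by_cases hxdz : x * d z = 0
    · have hx0 : x = 0 := hP.eq_zero_of_mul_central hx (hd.2.2 z hz) hdz
        (commute_apply_of_leibniz hd.2.1 (central hz hdz)) hxdz
      rw [hx0]
      exact Commute.zero_right r
    · have hdxz : d (x * z) ≠ 0 := by rwa [hd.2.1, hdx, zero_mul, zero_add]
      exact hP.forall_commute_of_mul_central hx hz hz0 (central hz hdz)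
        (central (hx.mul hz) hdxz) r
  · exact central hx hdx r

end Commutativity

end

theorem stmt13 {G R : Type*} [AddCommGroup G] [DecidableEq G] [Ring R] (A : G → AddSubgroup R) [GradedRing A] (hP : GrPrime A)
    (I : AddSubgroup R) (hI0 : I ≠ ⊥)
    (hIl : ∀ (r : R), ∀ x ∈ I, r * x ∈ I) (hIr : ∀ (r : R), ∀ x ∈ I, x * r ∈ I)
    (hIgr : ∀ x ∈ I, ∀ g : G, (DirectSum.decompose A x g : R) ∈ I)
    (F d : R → R) (hF : IsGenHomogDer A F d) (hd : d ≠ 0)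
    (h : ∀ x ∈ I, ∀ y ∈ I, ∀ r : R, (F (x * y) + x * y) * r = r * (F (x * y) + x * y)) :
    ∀ a b : R, a * b = b * a := by
  obtain ⟨-, hder, hFmul, -⟩ := hF
  have hI : IsGradedIdeal A I := ⟨hIl, hIr, fun g x hx => hIgr x hx g⟩
  have central : ∀ x, IsHomog A x → ∀ r, Commute r x :=
    fun x hx => forall_commute_of_homog hP hI hI0 hFmul hder hd h hx
  intro a b
  exact forall_commute_of_forall_homog A (fun r hr => (central r hr b).symm) a
end

section
/- Let R be a gr-prime graded ring and I a nonzero graded ideal. Suppose F₁ and F₂ are generalized homogeneous derivations of R associated with nonzero homogeneous derivations d₁ and d₂ respectively, such that F₁(x)F₂(y) + xy ∈ Z(R) for all x, y ∈ I. Then R is commutative. -/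
/-
Gr-primeness is used in the form: if `n ≠ 0` is homogeneous and `M t n = 0` for all homogeneous
`t`, then `M = 0` (apply it to each homogeneous component of `M`); likewise on the left.

Choose homogeneous `x, y' ∈ I` with `a := F₁(x) y' ≠ 0`, possible because `d₁ ≠ 0`. The
hypothesis applied to `x` and `y' t` says that `Φ(t) := F₁(x) F₂(y' t) + x y' t` is central for
every `t`, and the Leibniz rule for `F₂` gives `a t d₂(s) = Φ(t s) - Φ(t) s`. If `R` is not
commutative, some homogeneous `q` is not central. The element `a T d₂(s)` with
`T = t' d₂(q) a t` factors as `(a t' d₂(q)) (a t d₂(s))`; comparing its commutators with `q`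
shows that `Φ(t) Φ(t') q` is central, which forces `Φ(t) Φ(t') = 0`. Hence
`a t d₂(u) Φ(t') = 0`, so `Φ = 0`, so `a t d₂(u) = 0` for all `t, u`, i.e. `d₂ = 0`.
-/

open DirectSum

theorem commutator_eq_of_mul_apply_eq_sub {R : Type*} [Ring R] {a : R} {Φ d : R → R}
    (hΦ : ∀ t, Φ t ∈ Subring.center R) (hX : ∀ t s, a * t * d s = Φ (t * s) - Φ t * s)
    (t s r : R) : a * t * d s * r - r * (a * t * d s) = Φ t * (r * s - s * r) := by
  rw [hX, mul_sub r, ← mul_assoc r, Subring.mem_center_iff.mp (hΦ (t * s)) r,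
    Subring.mem_center_iff.mp (hΦ t) r]
  noncomm_ring

section Decomposition

variable {G R : Type*} [AddMonoid G] [DecidableEq G] [Ring R] {A : G → AddSubgroup R}
  [GradedRing A]

theorem eq_zero_of_forall_decompose_eq_zero {M : R} (hM : ∀ i, (decompose A M i : R) = 0) :
    M = 0 := by
  apply (decompose A).injective
  ext i
  simp [hM i]

theorem exists_homog_mem_ne_zero (I : AddSubgroup R) (hI0 : I ≠ ⊥)
    (hIgr : ∀ x ∈ I, ∀ i, (decompose A x i : R) ∈ I) :
    ∃ i y, y ∈ I ∧ y ∈ A i ∧ y ≠ 0 := by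
  obtain ⟨m, hmI, hm0⟩ : ∃ m ∈ I, m ≠ 0 := by
    by_contra! h
    exact hI0 ((AddSubgroup.eq_bot_iff_forall I).mpr h)
  by_contra! h
  exact hm0 (eq_zero_of_forall_decompose_eq_zero fun i =>
    h i _ (hIgr m hmI i) (SetLike.coe_mem _))

theorem exists_homog_apply_ne_zero {d : R → R} (hadd : ∀ x y, d (x + y) = d x + d y)
    (hd : d ≠ 0) : ∃ i u, u ∈ A i ∧ d u ≠ 0 := by
  by_contra! h
  refine hd (funext fun r => ?_)
  induction r using DirectSum.Decomposition.inductionOn A with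
  | zero => simpa using hadd 0 0
  | homogeneous u => exact h _ _ u.2
  | add u u' hu hu' => simp only [hadd, hu, hu', Pi.zero_apply, add_zero]

theorem commute_of_forall_homog (h : ∀ i j (p q : R), p ∈ A i → q ∈ A j → Commute p q)
    (a b : R) : Commute a b := by
  induction b using DirectSum.Decomposition.inductionOn A with
  | zero => exact Commute.zero_right a
  | homogeneous q =>
    induction a using DirectSum.Decomposition.inductionOn A with
    | zero => exact Commute.zero_left _
    | homogeneous p => exact h _ _ _ _ p.2 q.2
    | add p p' hp hp' => exact hp.add_left hp'
  | add q q' hq hq' => exact hq.add_right hq'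

end Decomposition

namespace GrPrime

variable {G R : Type*} [DecidableEq G] [Ring R] {A : G → AddSubgroup R}

theorem eq_zero_of_forall_mul_mul_eq_zero_right [AddRightCancelMonoid G] [GradedRing A]
    (hP : GrPrime A) {i : G} {n M : R} (hn : n ∈ A i) (hn0 : n ≠ 0)
    (H : ∀ j (t : R), t ∈ A j → M * t * n = 0) : M = 0 := by
  refine eq_zero_of_forall_decompose_eq_zero (A := A) fun k => ?_
  refine (hP _ n ⟨k, SetLike.coe_mem _⟩ ⟨i, hn⟩ fun r => ?_).resolve_right hn0
  induction r using DirectSum.Decomposition.inductionOn A with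
  | zero => simp
  | homogeneous t =>
    rw [mul_assoc, ← coe_decompose_mul_add_of_right_mem A (SetLike.mul_mem_graded t.2 hn),
      ← mul_assoc, H _ _ t.2, decompose_zero, DirectSum.zero_apply, ZeroMemClass.coe_zero]
  | add t t' ht ht' => rw [mul_add, add_mul, ht, ht', add_zero]

theorem eq_zero_of_forall_mul_mul_eq_zero_left [AddLeftCancelMonoid G] [GradedRing A]
    (hP : GrPrime A) {i : G} {n M : R} (hn : n ∈ A i) (hn0 : n ≠ 0)
    (H : ∀ j (t : R), t ∈ A j → n * t * M = 0) : M = 0 := by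
  refine eq_zero_of_forall_decompose_eq_zero (A := A) fun k => ?_
  refine (hP n _ ⟨i, hn⟩ ⟨k, SetLike.coe_mem _⟩ fun r => ?_).resolve_left hn0
  induction r using DirectSum.Decomposition.inductionOn A with
  | zero => simp
  | homogeneous t =>
    rw [← coe_decompose_mul_add_of_left_mem A (SetLike.mul_mem_graded hn t.2),
      H _ _ t.2, decompose_zero, DirectSum.zero_apply, ZeroMemClass.coe_zero]
  | add t t' ht ht' => rw [mul_add, add_mul, ht, ht', add_zero]

theorem eq_zero_of_mem_center_of_mul_eq_zero [AddRightCancelMonoid G] [GradedRing A]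
    (hP : GrPrime A) {i : G} {n z : R} (hz : z ∈ Subring.center R) (hn : n ∈ A i)
    (hn0 : n ≠ 0) (hzn : z * n = 0) : z = 0 :=
  hP.eq_zero_of_forall_mul_mul_eq_zero_right hn hn0 fun _ t _ => by
    rw [← Subring.mem_center_iff.mp hz t, mul_assoc, hzn, mul_zero]

theorem exists_homog_mem_apply_ne_zero [AddLeftCancelMonoid G] [GradedRing A] (hP : GrPrime A)
    (I : AddSubgroup R) (hIr : ∀ (r : R), ∀ x ∈ I, x * r ∈ I) {j : G} {y : R}
    (hyI : y ∈ I) (hy : y ∈ A j) (hy0 : y ≠ 0) {F d : R → R}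
    (hF : ∀ x y, F (x * y) = F x * y + x * d y)
    (hdadd : ∀ x y, d (x + y) = d x + d y) (hd : d ≠ 0) :
    ∃ i x, x ∈ I ∧ x ∈ A i ∧ F x ≠ 0 := by
  by_contra! hF0
  obtain ⟨k, z, hz, hdz⟩ := exists_homog_apply_ne_zero (A := A) hdadd hd
  refine hdz (hP.eq_zero_of_forall_mul_mul_eq_zero_left hy hy0 fun l t ht => ?_)
  have hyt : y * t ∈ I := hIr t y hyI
  have hytA : y * t ∈ A (j + l) := SetLike.mul_mem_graded hy ht
  have := hF (y * t) z
  rwa [hF0 _ _ hyt hytA, hF0 _ _ (hIr z _ hyt) (SetLike.mul_mem_graded hytA hz), zero_mul,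
    zero_add, eq_comm] at this

theorem exists_mem_apply_mul_ne_zero [AddCancelMonoid G] [GradedRing A] (hP : GrPrime A)
    (I : AddSubgroup R) (hIl : ∀ (r : R), ∀ x ∈ I, r * x ∈ I)
    (hIr : ∀ (r : R), ∀ x ∈ I, x * r ∈ I) {j : G} {y : R} (hyI : y ∈ I) (hy : y ∈ A j)
    (hy0 : y ≠ 0) {F d : R → R} (hF : ∀ x y, F (x * y) = F x * y + x * d y)
    (hFhom : ∀ x, IsHomog A x → IsHomog A (F x)) (hdadd : ∀ x y, d (x + y) = d x + d y)
    (hd : d ≠ 0) : ∃ x ∈ I, ∃ y' ∈ I, IsHomog A (F x * y') ∧ F x * y' ≠ 0 := by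
  obtain ⟨i, x, hxI, hx, hFx0⟩ := hP.exists_homog_mem_apply_ne_zero I hIr hyI hy hy0 hF hdadd hd
  obtain ⟨iF, hFx⟩ := hFhom x ⟨i, hx⟩
  by_contra! H
  refine hFx0 (hP.eq_zero_of_forall_mul_mul_eq_zero_right hy hy0 fun l t ht => ?_)
  rw [mul_assoc]
  exact H x hxI _ (hIl t y hyI)
    ⟨iF + (l + j), SetLike.mul_mem_graded hFx (SetLike.mul_mem_graded ht hy)⟩

section Commutator

variable [AddCancelCommMonoid G] [GradedRing A] {i j : G} {p q : R}

theorem eq_zero_of_forall_mul_commutator_eq_zero (hP : GrPrime A) (hp : p ∈ A i)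
    (hq : q ∈ A j) (hpq : p * q ≠ q * p) {M : R} (H : ∀ s, M * (s * q - q * s) = 0) :
    M = 0 := by
  have hn : p * q - q * p ∈ A (i + j) :=
    sub_mem (SetLike.mul_mem_graded hp hq) (add_comm i j ▸ SetLike.mul_mem_graded hq hp)
  refine hP.eq_zero_of_forall_mul_mul_eq_zero_right hn (sub_ne_zero.mpr hpq) fun _ s _ => ?_
  calc M * s * (p * q - q * p) = M * (s * p * q - q * (s * p)) - M * (s * q - q * s) * p := by
        noncomm_ring
    _ = 0 := by rw [H, H, zero_mul, sub_zero]

theorem eq_zero_of_mem_center_of_mul_mem_center (hP : GrPrime A) (hp : p ∈ A i)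
    (hq : q ∈ A j) (hpq : p * q ≠ q * p) {z : R} (hz : z ∈ Subring.center R)
    (hzq : z * q ∈ Subring.center R) : z = 0 :=
  hP.eq_zero_of_forall_mul_commutator_eq_zero hp hq hpq fun s => by
    rw [mul_sub, ← mul_assoc, ← Subring.mem_center_iff.mp hz s, mul_assoc,
      Subring.mem_center_iff.mp hzq s]
    exact sub_eq_zero.mpr (mul_assoc z q s)

variable {a : R} {Φ d : R → R}

theorem apply_mul_apply_eq_zero_of_mul_apply_eq_sub (hP : GrPrime A) (hp : p ∈ A i)
    (hq : q ∈ A j) (hpq : p * q ≠ q * p) (hΦ : ∀ t, Φ t ∈ Subring.center R)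
    (hX : ∀ t s, a * t * d s = Φ (t * s) - Φ t * s) (t t' : R) : Φ t * Φ t' = 0 := by
  set Y := a * t' * d q with hY
  set T := t' * d q * (a * t)
  have hYq : Y * q = q * Y := sub_eq_zero.mp <|
    (commutator_eq_of_mul_apply_eq_sub hΦ hX t' q q).trans (by rw [sub_self, mul_zero])
  have hM : ∀ s, (Φ t * Y - Φ T) * (s * q - q * s) = 0 := fun s => by
    set X := a * t * d s
    have hTs := commutator_eq_of_mul_apply_eq_sub hΦ hX T s q
    have hXs : X * q - q * X = Φ t * (q * s - s * q) :=
      commutator_eq_of_mul_apply_eq_sub hΦ hX t s q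
    rw [show a * T * d s = Y * X by simp only [T, Y, X, mul_assoc]] at hTs
    calc (Φ t * Y - Φ T) * (s * q - q * s)
        = Φ T * (q * s - s * q) - Y * Φ t * (q * s - s * q) := by
          rw [Subring.mem_center_iff.mp (hΦ t) Y]; noncomm_ring
      _ = Y * X * q - q * (Y * X) - Y * (X * q - q * X) := by rw [hTs, hXs, mul_assoc]
      _ = (Y * q - q * Y) * X := by noncomm_ring
      _ = 0 := by rw [hYq, sub_self, zero_mul]
  have hYT : Φ t * Y = Φ T :=
    sub_eq_zero.mp (hP.eq_zero_of_forall_mul_commutator_eq_zero hp hq hpq hM)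
  have hzq : Φ t * Φ t' * q = Φ t * Φ (t' * q) - Φ T := by
    rw [← hYT, hY, hX]; noncomm_ring
  refine hP.eq_zero_of_mem_center_of_mul_mem_center hp hq hpq (mul_mem (hΦ t) (hΦ t')) ?_
  rw [hzq]
  exact sub_mem (mul_mem (hΦ t) (hΦ _)) (hΦ T)

theorem apply_eq_zero_of_mul_apply_eq_sub (hP : GrPrime A) {l : G} (ha : a ∈ A l)
    (ha0 : a ≠ 0) (hp : p ∈ A i) (hq : q ∈ A j) (hpq : p * q ≠ q * p)
    (hΦ : ∀ t, Φ t ∈ Subring.center R) (hX : ∀ t s, a * t * d s = Φ (t * s) - Φ t * s)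
    {k : G} {u : R} (hu : d u ∈ A k) : d u = 0 := by
  have hΦΦ := apply_mul_apply_eq_zero_of_mul_apply_eq_sub hP hp hq hpq hΦ hX
  by_contra hu0
  have hdΦ : ∀ t', d u * Φ t' = 0 := fun t' =>
    hP.eq_zero_of_forall_mul_mul_eq_zero_left ha ha0 fun _ t _ => by
      calc a * t * (d u * Φ t') = Φ (t * u) * Φ t' - Φ t * (u * Φ t') := by
            rw [← mul_assoc, hX]; noncomm_ring
        _ = 0 := by
          rw [Subring.mem_center_iff.mp (hΦ t') u, ← mul_assoc, hΦΦ, hΦΦ, zero_mul, sub_zero]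
  have hΦ0 : ∀ t, Φ t = 0 := fun t => hP.eq_zero_of_mem_center_of_mul_eq_zero (hΦ t) hu hu0
    ((Subring.mem_center_iff.mp (hΦ t) (d u)).symm.trans (hdΦ t))
  exact hu0 (hP.eq_zero_of_forall_mul_mul_eq_zero_left ha ha0 fun _ t _ => by
    rw [hX, hΦ0, hΦ0, zero_mul, sub_zero])

end Commutator

end GrPrime


theorem stmt15 {G R : Type*} [AddCommGroup G] [DecidableEq G] [Ring R] (A : G → AddSubgroup R) [GradedRing A] (hP : GrPrime A)
    (I : AddSubgroup R) (hI0 : I ≠ ⊥)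
    (hIl : ∀ (r : R), ∀ x ∈ I, r * x ∈ I) (hIr : ∀ (r : R), ∀ x ∈ I, x * r ∈ I)
    (hIgr : ∀ x ∈ I, ∀ g : G, (DirectSum.decompose A x g : R) ∈ I)
    (F1 d1 F2 d2 : R → R) (hF1 : IsGenHomogDer A F1 d1) (hF2 : IsGenHomogDer A F2 d2)
    (hd1 : d1 ≠ 0) (hd2 : d2 ≠ 0)
    (h : ∀ x ∈ I, ∀ y ∈ I, ∀ r : R, (F1 x * F2 y + x * y) * r = r * (F1 x * F2 y + x * y)) :
    ∀ a b : R, a * b = b * a := by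
  obtain ⟨-, ⟨hd1add, -, -⟩, hF1mul, hF1hom⟩ := hF1
  obtain ⟨-, ⟨hd2add, -, hd2hom⟩, hF2mul, -⟩ := hF2
  obtain ⟨j, y, hyI, hy, hy0⟩ := exists_homog_mem_ne_zero I hI0 hIgr
  obtain ⟨x, hxI, y', hy'I, ⟨l, ha⟩, ha0⟩ :=
    hP.exists_mem_apply_mul_ne_zero I hIl hIr hyI hy hy0 hF1mul hF1hom hd1add hd1
  obtain ⟨k, u, hu, hdu0⟩ := exists_homog_apply_ne_zero (A := A) hd2add hd2
  obtain ⟨k', hdu⟩ := hd2hom u ⟨k, hu⟩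
  intro a b
  by_contra hab
  obtain ⟨i₁, j₁, p, q, hp, hq, hpq⟩ :
      ∃ i j p q, p ∈ A i ∧ q ∈ A j ∧ ¬Commute p q := by
    by_contra! H
    exact hab (commute_of_forall_homog H a b).eq
  refine hdu0 (hP.apply_eq_zero_of_mul_apply_eq_sub
    (Φ := fun t => F1 x * F2 (y' * t) + x * (y' * t)) ha ha0 hp hq hpq (fun t => ?_)
    (fun t s => ?_) hdu)
  · exact Subring.mem_center_iff.mpr fun r => (h x hxI _ (hIr t _ hy'I) r).symm
  · rw [← mul_assoc y' t s, hF2mul]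
    noncomm_ring
end

section
/- Let R be a gr-prime graded ring, I a nonzero graded ideal, and d a homogeneous derivation of R. If I·d(z) = {0} for all z ∈ R, then d = 0. -/
open DirectSum

section

variable {ι R : Type*} [DecidableEq ι] [Ring R] (A : ι → AddSubgroup R) [Decomposition A]

theorem AddSubgroup.exists_isHomog_mem_ne_zero {I : AddSubgroup R}
    (hIgr : ∀ x ∈ I, ∀ i, (decompose A x i : R) ∈ I) (hI0 : I ≠ ⊥) :
    ∃ x ∈ I, x ≠ 0 ∧ IsHomog A x := by
  classical
  obtain ⟨⟨a, haI⟩, ha0⟩ := AddSubgroup.ne_bot_iff_exists_ne_zero.mp hI0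
  by_contra! hc
  suffices a = 0 from ha0 (Subtype.ext this)
  rw [← sum_support_decompose A a]
  refine Finset.sum_eq_zero fun i _ => ?_
  by_contra hai
  exact hc _ (hIgr a haI i) hai ⟨i, SetLike.coe_mem _⟩

theorem eq_zero_of_forall_isHomog {M : Type*} [AddLeftCancelMonoid M] {d : R → M}
    (hadd : ∀ x y, d (x + y) = d x + d y) (h : ∀ a, IsHomog A a → d a = 0) : d = 0 := by
  funext z
  rw [Pi.zero_apply]
  induction z using Decomposition.inductionOn A with
  | zero => simpa using hadd 0 0
  | homogeneous m => exact h m ⟨_, m.2⟩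
  | add x y hx hy => rw [hadd, hx, hy, add_zero]

end

theorem stmt17_general {G R : Type*} [AddCommGroup G] [DecidableEq G] [Ring R] (A : G → AddSubgroup R) [GradedRing A] (hP : GrPrime A)
    (I : AddSubgroup R) (hI0 : I ≠ ⊥)
    (hIr : ∀ (r : R), ∀ x ∈ I, x * r ∈ I)
    (hIgr : ∀ x ∈ I, ∀ g : G, (DirectSum.decompose A x g : R) ∈ I)
    (d : R → R) (hd : IsHomogDer A d)
    (h : ∀ z : R, ∀ x ∈ I, x * d z = 0) :
    d = 0 := by
  obtain ⟨hadd, -, hhom⟩ := hd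
  obtain ⟨x, hxI, hx0, hx⟩ := AddSubgroup.exists_isHomog_mem_ne_zero A hIgr hI0
  refine eq_zero_of_forall_isHomog A hadd fun z hz => ?_
  exact (hP x (d z) hx (hhom z hz) fun r => h z _ (hIr r x hxI)).resolve_left hx0

theorem stmt17 {G R : Type*} [AddCommGroup G] [DecidableEq G] [Ring R] (A : G → AddSubgroup R) [GradedRing A] (hP : GrPrime A)
    (I : AddSubgroup R) (hI0 : I ≠ ⊥)
    (hIl : ∀ (r : R), ∀ x ∈ I, r * x ∈ I) (hIr : ∀ (r : R), ∀ x ∈ I, x * r ∈ I)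
    (hIgr : ∀ x ∈ I, ∀ g : G, (DirectSum.decompose A x g : R) ∈ I)
    (d : R → R) (hd : IsHomogDer A d)
    (h : ∀ z : R, ∀ x ∈ I, x * d z = 0) :
    d = 0 :=
  stmt17_general A hP I hI0 hIr hIgr d hd h
end

section
/- Let R be a gr-prime graded ring and I a nonzero graded ideal of R. If [z, z₁] I = {0} for all z, z₁ ∈ I (i.e., I is a commutative-modulo-annihilation ideal), then all elements of I commute: [z, z₁] = 0 for all z, z₁ ∈ I, and consequently R is commutative. -/
/-!
In a gr-prime ring a nonzero graded left ideal `I` has zero left annihilator: if `c * I = 0`,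
then every homogeneous component of `c` kills `R x` for a nonzero homogeneous `x ∈ I`.
The hypothesis thus says that all commutators of `I` vanish. A commutative left ideal with zero
left annihilator is central, since `[a, r] y = a (r y) - r (a y) = 0` for `a, y ∈ I`, and then
`[s, r] a = s (r a) - r (s a) = 0` for `a ∈ I` because `r a` is central.
-/

section Ring

variable {R : Type*} [Ring R] {I : AddSubgroup R}

theorem commute_of_mem_of_commutative_left_ideal (hIl : ∀ (r : R), ∀ x ∈ I, r * x ∈ I)
    (hann : ∀ c : R, (∀ y ∈ I, c * y = 0) → c = 0)
    (hcomm : ∀ z ∈ I, ∀ z1 ∈ I, z * z1 = z1 * z) {a : R} (ha : a ∈ I) (r : R) :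
    Commute a r := by
  refine sub_eq_zero.mp (hann _ fun y hy => ?_)
  calc (a * r - r * a) * y = a * (r * y) - r * (a * y) := by noncomm_ring
    _ = r * y * a - r * (y * a) := by rw [hcomm a ha _ (hIl r y hy), hcomm a ha y hy]
    _ = 0 := by rw [mul_assoc, sub_self]

theorem commute_of_commutative_left_ideal (hIl : ∀ (r : R), ∀ x ∈ I, r * x ∈ I)
    (hann : ∀ c : R, (∀ y ∈ I, c * y = 0) → c = 0)
    (hcomm : ∀ z ∈ I, ∀ z1 ∈ I, z * z1 = z1 * z) (s r : R) : Commute s r := by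
  have hcentral : ∀ a ∈ I, ∀ r, Commute a r := fun _ ha =>
    commute_of_mem_of_commutative_left_ideal hIl hann hcomm ha
  refine sub_eq_zero.mp (hann _ fun a ha => ?_)
  calc (s * r - r * s) * a = s * (r * a) - r * (s * a) := by noncomm_ring
    _ = r * (a * s) - r * (s * a) := by rw [← (hcentral _ (hIl r a ha) s).eq, mul_assoc]
    _ = 0 := by rw [(hcentral a ha s).eq, sub_self]

end Ring

section Graded

variable {G R : Type*} [DecidableEq G] [Ring R] {A : G → AddSubgroup R}

theorem AddSubgroup.exists_homog_ne_zero_of_ne_bot [DirectSum.Decomposition A]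
    {I : AddSubgroup R} (hI0 : I ≠ ⊥)
    (hIgr : ∀ x ∈ I, ∀ g : G, (DirectSum.decompose A x g : R) ∈ I) :
    ∃ x ∈ I, ∃ g, x ∈ A g ∧ x ≠ 0 := by
  classical
  obtain ⟨a, haI, ha0⟩ := I.bot_or_exists_ne_zero.resolve_left hI0
  obtain ⟨g, hg⟩ : ∃ g, (DirectSum.decompose A a g : R) ≠ 0 := by
    by_contra! hcomp
    refine ha0 ?_
    rw [← DirectSum.sum_support_decompose A a]
    exact Finset.sum_eq_zero fun g _ => hcomp g
  exact ⟨_, hIgr a haI g, g, SetLike.coe_mem _, hg⟩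

theorem GrPrime.eq_zero_of_forall_mul_mul_eq_zero [AddRightCancelMonoid G] [GradedRing A]
    (hP : GrPrime A) {x : R} {g : G} (hx : x ∈ A g) (hx0 : x ≠ 0) {c : R}
    (hc : ∀ r : R, c * r * x = 0) : c = 0 := by
  classical
  suffices hcomp : ∀ i, (DirectSum.decompose A c i : R) = 0 by
    rw [← DirectSum.sum_support_decompose A c]
    exact Finset.sum_eq_zero fun i _ => hcomp i
  intro i
  have hci : ∀ r : R, (DirectSum.decompose A c i : R) * r * x = 0 := by
    refine DirectSum.Decomposition.inductionOn A (by simp) (fun {j} m => ?_)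
      (fun m m' hm hm' => by rw [mul_add, add_mul, hm, hm', add_zero])
    have hmx : (m : R) * x ∈ A (j + g) := SetLike.mul_mem_graded m.2 hx
    rw [mul_assoc, ← DirectSum.coe_decompose_mul_add_of_right_mem A hmx, ← mul_assoc, hc,
      DirectSum.decompose_zero, DirectSum.zero_apply, ZeroMemClass.coe_zero]
  exact (hP _ x ⟨i, SetLike.coe_mem _⟩ ⟨g, hx⟩ hci).resolve_right hx0

theorem GrPrime.eq_zero_of_forall_mul_mem_eq_zero [AddRightCancelMonoid G] [GradedRing A]
    (hP : GrPrime A) {I : AddSubgroup R} (hI0 : I ≠ ⊥)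
    (hIl : ∀ (r : R), ∀ x ∈ I, r * x ∈ I)
    (hIgr : ∀ x ∈ I, ∀ g : G, (DirectSum.decompose A x g : R) ∈ I)
    {c : R} (hc : ∀ y ∈ I, c * y = 0) : c = 0 := by
  obtain ⟨x, hxI, g, hx, hx0⟩ := I.exists_homog_ne_zero_of_ne_bot hI0 hIgr
  exact hP.eq_zero_of_forall_mul_mul_eq_zero hx hx0 fun r => by
    rw [mul_assoc, hc _ (hIl r x hxI)]

end Graded

theorem stmt18_general {G R : Type*} [AddCommGroup G] [DecidableEq G] [Ring R] (A : G → AddSubgroup R) [GradedRing A] (hP : GrPrime A)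
    (I : AddSubgroup R) (hI0 : I ≠ ⊥)
    (hIl : ∀ (r : R), ∀ x ∈ I, r * x ∈ I)
    (hIgr : ∀ x ∈ I, ∀ g : G, (DirectSum.decompose A x g : R) ∈ I)
    (h : ∀ z ∈ I, ∀ z1 ∈ I, ∀ x ∈ I, (z * z1 - z1 * z) * x = 0) :
    (∀ z ∈ I, ∀ z1 ∈ I, z * z1 = z1 * z) ∧ (∀ a b : R, a * b = b * a) := by
  have hann : ∀ c : R, (∀ y ∈ I, c * y = 0) → c = 0 := fun c =>
    hP.eq_zero_of_forall_mul_mem_eq_zero hI0 hIl hIgr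
  have hcomm : ∀ z ∈ I, ∀ z1 ∈ I, z * z1 = z1 * z := fun z hz z1 hz1 =>
    sub_eq_zero.mp (hann _ (h z hz z1 hz1))
  exact ⟨hcomm, fun a b => (commute_of_commutative_left_ideal hIl hann hcomm a b).eq⟩

theorem stmt18 {G R : Type*} [AddCommGroup G] [DecidableEq G] [Ring R] (A : G → AddSubgroup R) [GradedRing A] (hP : GrPrime A)
    (I : AddSubgroup R) (hI0 : I ≠ ⊥)
    (hIl : ∀ (r : R), ∀ x ∈ I, r * x ∈ I) (hIr : ∀ (r : R), ∀ x ∈ I, x * r ∈ I)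
    (hIgr : ∀ x ∈ I, ∀ g : G, (DirectSum.decompose A x g : R) ∈ I)
    (h : ∀ z ∈ I, ∀ z1 ∈ I, ∀ x ∈ I, (z * z1 - z1 * z) * x = 0) :
    (∀ z ∈ I, ∀ z1 ∈ I, z * z1 = z1 * z) ∧ (∀ a b : R, a * b = b * a) :=
  stmt18_general A hP I hI0 hIl hIgr h
end

section
/- In a gr-prime graded ring R, if a ∈ R satisfies aRd(y) = {0} for all y ∈ R, where d is a homogeneous derivation and a is a nonzero homogeneous element, then d = 0. -/
theorem DirectSum.Decomposition.apply_eq_zero_of_forall_mem {ι M N : Type*} [DecidableEq ι] [AddCommGroup M]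
    [AddCommGroup N] (A : ι → AddSubgroup M) [DirectSum.Decomposition A] (f : M → N)
    (hf : ∀ x y : M, f (x + y) = f x + f y) (h : ∀ i, ∀ x ∈ A i, f x = 0) (x : M) : f x = 0 := by
  induction x using DirectSum.Decomposition.inductionOn A with
  | zero => simpa using hf 0 0
  | homogeneous m => exact h _ m m.2
  | add x y hx hy => rw [hf, hx, hy, add_zero]

theorem IsHomogDer.apply_eq_zero_of_isHomog {G R : Type*} [Ring R] {A : G → AddSubgroup R}
    (hP : GrPrime A) {d : R → R} (hd : IsHomogDer A d) {a : R} (ha : IsHomog A a)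
    (ha0 : a ≠ 0) (h : ∀ y r : R, a * r * d y = 0) {y : R} (hy : IsHomog A y) : d y = 0 :=
  (hP a (d y) ha (hd.2.2 y hy) (h y)).resolve_left ha0

theorem stmt19 {G R : Type*} [AddCommGroup G] [DecidableEq G] [Ring R] (A : G → AddSubgroup R) [GradedRing A] (hP : GrPrime A)
    (d : R → R) (hd : IsHomogDer A d)
    (a : R) (ha : IsHomog A a) (ha0 : a ≠ 0)
    (h : ∀ y r : R, a * r * d y = 0) :
    d = 0 :=
  funext <| DirectSum.Decomposition.apply_eq_zero_of_forall_mem A d hd.1 fun i _ hx =>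
    hd.apply_eq_zero_of_isHomog hP ha ha0 h ⟨i, hx⟩
end
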